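/- For σ_R > 0 and k ∈ (0,1), the derivative ∂R/∂x(x,σ_R,k) vanishes at a point x ∈ ℝ if and only if x = 0 or x = ±σ_R·k·√(2·ln(k²)/(k²−1)). (Note that ln(k²) < 0 and k² − 1 < 0, so the quantity under the square root is positive.) -/
import Mathlib


open Real Set

/-- The ring filter: difference of two unnormalized Gaussians. -/
noncomputable def R (x σ k : ℝ) : ℝ :=
  Real.exp (-x ^ 2 / (2 * σ ^ 2)) - Real.exp (-x ^ 2 / (2 * (σ * k) ^ 2))

theorem deriv_R_eq_zero_iff (σ k : ℝ) (hσ : 0 < σ) (hk : k ∈ Set.Ioo (0 : ℝ) 1)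
    (x : ℝ) :
    deriv (fun y => R y σ k) x = 0 ↔
      x = 0 ∨ x = σ * k * Real.sqrt (2 * Real.log (k ^ 2) / (k ^ 2 - 1)) ∨
        x = -(σ * k * Real.sqrt (2 * Real.log (k ^ 2) / (k ^ 2 - 1))) := by
  obtain ⟨hk0, hk1⟩ := hk
  have hk2 : k ^ 2 < 1 := by nlinarith
  have hk2pos : 0 < k ^ 2 := by positivity
  set L : ℝ := Real.log (k ^ 2) with hL_def
  have hL : L < 0 := Real.log_neg hk2pos hk2
  have hc : 0 < 2 * L / (k ^ 2 - 1) :=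
    div_pos_of_neg_of_neg (by linarith) (by linarith)
  set a : ℝ := 2 * σ ^ 2 with ha_def
  set b : ℝ := 2 * (σ * k) ^ 2 with hb_def
  have ha : a ≠ 0 := by positivity
  have hb : b ≠ 0 := by positivity
  -- derivative computation
  have h1 : HasDerivAt (fun y : ℝ => -y ^ 2 / a) (-(2 * x) / a) x := by
    have := ((hasDerivAt_pow 2 x).neg).div_const a
    simpa using this
  have h2 : HasDerivAt (fun y : ℝ => -y ^ 2 / b) (-(2 * x) / b) x := by
    have := ((hasDerivAt_pow 2 x).neg).div_const b
    simpa using this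
  have hder : HasDerivAt (fun y => R y σ k)
      (Real.exp (-x ^ 2 / a) * (-(2 * x) / a)
        - Real.exp (-x ^ 2 / b) * (-(2 * x) / b)) x :=
    h1.exp.sub h2.exp
  rw [hder.deriv]
  set E1 : ℝ := Real.exp (-x ^ 2 / a) with hE1
  set E2 : ℝ := Real.exp (-x ^ 2 / b) with hE2
  have hE1pos : 0 < E1 := Real.exp_pos _
  have hE2pos : 0 < E2 := Real.exp_pos _
  have key : E1 * (-(2 * x) / a) - E2 * (-(2 * x) / b) = 0 ↔
      x = 0 ∨ E1 / a = E2 / b := by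
    have factored : E1 * (-(2 * x) / a) - E2 * (-(2 * x) / b)
        = -(2 * x) * (E1 / a - E2 / b) := by ring
    rw [factored, mul_eq_zero]
    constructor
    · rintro (h | h)
      · left; linarith
      · right; linarith [sub_eq_zero.1 h]
    · rintro (h | h)
      · left; rw [h]; ring
      · right; rw [h]; ring
  rw [key]
  have hba : b / a = k ^ 2 := by
    rw [ha_def, hb_def]
    field_simp
  have key2 : E1 / a = E2 / b ↔ x ^ 2 = (σ * k) ^ 2 * (2 * L / (k ^ 2 - 1)) := by
    have step1 : E1 / a = E2 / b ↔ Real.exp (-x ^ 2 / b + x ^ 2 / a) = k ^ 2 := by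
      have hexp : Real.exp (-x ^ 2 / b + x ^ 2 / a) = E2 / E1 := by
        rw [hE1, hE2, ← Real.exp_sub]
        ring_nf
      rw [hexp, ← hba]
      rw [div_eq_div_iff ha hb, div_eq_div_iff (ne_of_gt hE1pos) ha]
      constructor
      · intro h; linarith
      · intro h; linarith
    have step2 : Real.exp (-x ^ 2 / b + x ^ 2 / a) = k ^ 2 ↔
        -x ^ 2 / b + x ^ 2 / a = L := by
      constructor
      · intro h
        have := congrArg Real.log h
        rwa [Real.log_exp] at this
      · intro h
        rw [h, hL_def, Real.exp_log hk2pos]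
    rw [step1, step2]
    have hk21 : k ^ 2 - 1 ≠ 0 := by linarith
    have hσ2 : (σ : ℝ) ≠ 0 := ne_of_gt hσ
    have hkne : (k : ℝ) ≠ 0 := ne_of_gt hk0
    rw [ha_def, hb_def]
    rw [div_add_div _ _ (by positivity : (2 * (σ * k) ^ 2 : ℝ) ≠ 0)
        (by positivity : (2 * σ ^ 2 : ℝ) ≠ 0)]
    rw [div_eq_iff (by positivity : (2 * (σ * k) ^ 2 * (2 * σ ^ 2) : ℝ) ≠ 0)]
    rw [← mul_div_assoc, eq_div_iff hk21]
    constructor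
    · intro h
      apply mul_left_cancel₀ (show (2 * σ ^ 2 : ℝ) ≠ 0 by positivity)
      linear_combination h
    · intro h
      linear_combination (2 * σ ^ 2) * h
  rw [key2]
  have hr : (σ * k) ^ 2 * (2 * L / (k ^ 2 - 1)) =
      (σ * k * Real.sqrt (2 * L / (k ^ 2 - 1))) ^ 2 := by
    rw [show (σ * k * Real.sqrt (2 * L / (k ^ 2 - 1))) ^ 2
        = (σ * k) ^ 2 * Real.sqrt (2 * L / (k ^ 2 - 1)) ^ 2 by ring,
      Real.sq_sqrt hc.le]
  rw [hr, sq_eq_sq_iff_eq_or_eq_neg]
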